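/- Counting period-2 configurations: |P₂| = |P₁| · (|P₁| − 1), where P₁ is the set of fixed points of F and P₂ is the set of configurations of minimal period 2 under F. -/
import Mathlib


/-- A site of the `L × L` toroidal lattice. -/
abbrev Site (L : ℕ) := ZMod L × ZMod L

/-- The set `Ω` of states: functions on the lattice with values in `{-1, 1}`. -/
def Omega (L : ℕ) := {x : Site L → ℤ // ∀ k, x k = 1 ∨ x k = -1}

namespace Q2R

variable {L : ℕ}

/-- The sum of the four von Neumann neighbors of site `k`. -/
def nbhdSum (x : Site L → ℤ) (k : Site L) : ℤ :=
  x (k + (1, 0)) + x (k - (1, 0)) + x (k + (0, 1)) + x (k - (0, 1))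

/-- The map `φ : Ω → Ω`, detecting null neighborhoods. -/
def phi (x : Omega L) : Omega L :=
  ⟨fun k => if nbhdSum x.1 k = 0 then -1 else 1, fun k => by
    by_cases h : nbhdSum x.1 k = 0 <;> simp [h]⟩

/-- Hadamard (pointwise) product `x ⊙ y`. -/
def had (x y : Omega L) : Omega L :=
  ⟨fun k => x.1 k * y.1 k, fun k => by
    rcases x.2 k with h | h <;> rcases y.2 k with h' | h' <;> simp [h, h']⟩

/-- The constant state `𝟙`. -/
def one : Omega L := ⟨fun _ => 1, fun _ => Or.inl rfl⟩

/-- Negation: `-x = (-𝟙) ⊙ x`. -/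
def neg (x : Omega L) : Omega L := had ⟨fun _ => -1, fun _ => Or.inr rfl⟩ x

/-- The Q2R map `F(x, y) = (y ⊙ φ(x), x)`. -/
def F : Omega L × Omega L → Omega L × Omega L := fun p => (had p.2 (phi p.1), p.1)

/-- The configuration `p` has minimal period `T ≥ 1` under `F`. -/
def IsMinPeriod (p : Omega L × Omega L) (T : ℕ) : Prop :=
  F^[T] p = p ∧ ∀ t, 0 < t → t < T → F^[t] p ≠ p

/-- The orbit of a configuration under `F`. -/
def orbit (p : Omega L × Omega L) : Set (Omega L × Omega L) :=
  {q | ∃ t : ℕ, F^[t] p = q}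

end Q2R

open Q2R
namespace Q2R

variable {L : ℕ}

lemma omega_ne_zero (x : Omega L) (k : Site L) : x.1 k ≠ 0 := by
  rcases x.2 k with h | h <;> simp [h]

lemma had_one (x : Omega L) : had x one = x := by
  apply Subtype.ext; funext k; exact mul_one _

lemma had_eq_self {x z : Omega L} : had x z = x ↔ z = one := by
  constructor
  · intro h
    apply Subtype.ext; funext k
    have hk := congrFun (congrArg Subtype.val h) k
    have hx := omega_ne_zero x k
    have hz : z.1 k = 1 := by
      rcases mul_right_eq_self₀.mp hk with h1 | h1
      · exact h1
      · exact absurd h1 hx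
    simpa [one] using hz
  · rintro rfl; exact had_one x

lemma F_fixed_iff (a b : Omega L) : F (a, b) = (a, b) ↔ b = a ∧ phi a = one := by
  show (had b (phi a), a) = (a, b) ↔ _
  constructor
  · intro h
    rw [Prod.ext_iff] at h
    obtain ⟨h1, h2⟩ := h
    simp only at h1 h2
    refine ⟨h2.symm, ?_⟩
    rw [h2] at h1 ⊢
    exact had_eq_self.mp h1
  · rintro ⟨rfl, h1⟩
    show (had b (phi b), b) = (b, b)
    rw [h1, had_one]

lemma F_two_iff (a b : Omega L) :
    F^[2] (a, b) = (a, b) ↔ phi a = one ∧ phi b = one := by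
  have hit : F^[2] (a, b) = F (F (a, b)) := rfl
  rw [hit]
  show (had a (phi (had b (phi a))), had b (phi a)) = (a, b) ↔ _
  constructor
  · intro h
    rw [Prod.ext_iff] at h
    obtain ⟨h1, h2⟩ := h
    simp only at h1 h2
    have hp : phi a = one := had_eq_self.mp h2
    rw [hp, had_one] at h1
    exact ⟨hp, had_eq_self.mp h1⟩
  · rintro ⟨h1, h2⟩
    rw [h1, had_one, h2, had_one]

lemma minPeriod_two_iff (a b : Omega L) :
    IsMinPeriod (a, b) 2 ↔ phi a = one ∧ phi b = one ∧ a ≠ b := by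
  unfold IsMinPeriod
  rw [F_two_iff]
  constructor
  · rintro ⟨⟨h1, h2⟩, hm⟩
    refine ⟨h1, h2, ?_⟩
    rintro rfl
    exact hm 1 one_pos one_lt_two (by
      show F (a, a) = (a, a)
      exact (F_fixed_iff a a).mpr ⟨rfl, h1⟩)
  · rintro ⟨h1, h2, hne⟩
    refine ⟨⟨h1, h2⟩, ?_⟩
    intro t ht ht2
    interval_cases t
    intro hF
    have : F (a, b) = (a, b) := hF
    exact hne ((F_fixed_iff a b).mp this).1.symm

end Q2R

open Q2R

/-- Counting period-2 configurations: `|P₂| = |P₁| · (|P₁| − 1)`. -/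
theorem q2r_card_P2 (L : ℕ) (hL : 2 ≤ L) (hE : Even L) :
    Nat.card {p : Omega L × Omega L | IsMinPeriod p 2} =
      Nat.card {p : Omega L × Omega L | F p = p} *
        (Nat.card {p : Omega L × Omega L | F p = p} - 1) := by
  classical
  haveI : NeZero L := ⟨by omega⟩
  haveI : Finite (Omega L) := by
    apply Finite.of_injective (fun x : Omega L => (fun k => x.1 k = 1 : Site L → Prop))
    intro x y h
    apply Subtype.ext; funext k
    have hk := congrFun h k
    have hk2 : (x.1 k = 1) ↔ (y.1 k = 1) := iff_of_eq hk
    clear h hk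
    rcases x.2 k with hx | hx <;> rcases y.2 k with hy | hy <;> simp_all
  set S := {x : Omega L // phi x = one} with hS
  haveI : Finite S := Subtype.finite
  haveI : Fintype S := Fintype.ofFinite S
  have e1 : {p : Omega L × Omega L | F p = p} ≃ S :=
    { toFun := fun p => ⟨p.1.1, ((F_fixed_iff p.1.1 p.1.2).mp p.2).2⟩
      invFun := fun x => ⟨(x.1, x.1), (F_fixed_iff x.1 x.1).mpr ⟨rfl, x.2⟩⟩
      left_inv := fun p => by
        have := ((F_fixed_iff p.1.1 p.1.2).mp p.2).1
        apply Subtype.ext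
        exact Prod.ext rfl this.symm
      right_inv := fun x => rfl }
  have e2 : {p : Omega L × Omega L | IsMinPeriod p 2} ≃ {q : S × S // q.1 ≠ q.2} :=
    { toFun := fun p =>
        ⟨(⟨p.1.1, ((minPeriod_two_iff p.1.1 p.1.2).mp p.2).1⟩,
          ⟨p.1.2, ((minPeriod_two_iff p.1.1 p.1.2).mp p.2).2.1⟩),
          fun h => ((minPeriod_two_iff p.1.1 p.1.2).mp p.2).2.2 (congrArg Subtype.val h)⟩
      invFun := fun q =>
        ⟨(q.1.1.1, q.1.2.1), (minPeriod_two_iff q.1.1.1 q.1.2.1).mpr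
          ⟨q.1.1.2, q.1.2.2, fun h => q.2 (Subtype.ext h)⟩⟩
      left_inv := fun p => rfl
      right_inv := fun q => rfl }
  rw [Nat.card_congr e1, Nat.card_congr e2]
  rw [Nat.card_eq_fintype_card, Nat.card_eq_fintype_card]
  have hfil : (Finset.univ.filter (fun q : S × S => q.1 ≠ q.2)) = Finset.univ.offDiag := by
    ext ⟨u, v⟩
    simp [Finset.mem_offDiag]
  rw [Fintype.card_subtype, hfil, Finset.offDiag_card, Finset.card_univ]
  have : Fintype.card S * Fintype.card S = Fintype.card S * (Fintype.card S - 1) + Fintype.card S := by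
    rcases Nat.eq_zero_or_pos (Fintype.card S) with h | h
    · simp [h]
    · have : Fintype.card S - 1 + 1 = Fintype.card S := Nat.succ_pred_eq_of_pos h
      nlinarith [this]
  omega
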